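/- Suppose the sets I_1,…,I_s ⊆ {1,…,n} have pairwise disjoint associated element sets Y_1,…,Y_s ⊆ {1,…,q} (where Y_k = E(j) for any j ∈ I_k), and f = Σᵢ₌₁^q fᵢ is coordinate partially separable with domains X_i. Then for steps s¹,…,s^s ∈ ℝⁿ with each s^k supported on I_k, the total decrease satisfies f(x + Σ_k s^k) − f(x) = Σ_k (f(x + s^k) − f(x)). -/

import Mathlib

/-!
Each summand `fᵢ` sees only the coordinates in `Xᵢ`, and a step supported on `I_k` touches those
coordinates only if `i ∈ Y_k`. Since the `Y_k` are disjoint, at most one step is visible to each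
`fᵢ`, so the change of `fᵢ` under the combined step is the sum of its changes under the single
steps; summing over `i` gives the claim.
-/

open Set

section

variable {ι κ M β : Type*} [AddCommMonoid M] {g : (ι → M) → β} {T : Set ι}

theorem DependsOn.apply_add_of_eqOn_zero (hg : DependsOn g T) {v : ι → M} (hv : EqOn v 0 T)
    (x : ι → M) : g (x + v) = g x :=
  hg fun j hj => by simp [hv hj]

variable [Fintype κ] [AddCommGroup β]

theorem DependsOn.apply_add_sum_sub_eq_sum_of_eqOn_zero (hg : DependsOn g T) {s : κ → ι → M}
    (k₀ : κ) (hs : ∀ k ≠ k₀, EqOn (s k) 0 T) (x : ι → M) :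
    g (x + ∑ k, s k) - g x = ∑ k, (g (x + s k) - g x) := by
  have hsum : EqOn (∑ k, s k) (s k₀) T := fun j hj => by
    rw [Finset.sum_apply, Fintype.sum_eq_single k₀ fun k hk => hs k hk hj]
  rw [Fintype.sum_eq_single (f := fun k => g (x + s k) - g x) k₀
    fun k hk => by rw [hg.apply_add_of_eqOn_zero (hs k hk), sub_self]]
  exact congrArg (· - g x) (hg fun j hj => by simp [hsum hj])

theorem DependsOn.apply_add_sum_sub_eq_sum (hg : DependsOn g T) {s : κ → ι → M}
    (hs : ∀ k₁ k₂, k₁ ≠ k₂ → EqOn (s k₁) 0 T ∨ EqOn (s k₂) 0 T) (x : ι → M) :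
    g (x + ∑ k, s k) - g x = ∑ k, (g (x + s k) - g x) := by
  by_cases hvisible : ∃ k₀, ¬EqOn (s k₀) 0 T
  · obtain ⟨k₀, hk₀⟩ := hvisible
    exact hg.apply_add_sum_sub_eq_sum_of_eqOn_zero k₀
      (fun k hk => (hs k k₀ hk).resolve_right hk₀) x
  · push Not at hvisible
    have hsum : EqOn (∑ k, s k) 0 T := fun j hj => by simp [hvisible _ hj]
    simp [hg.apply_add_of_eqOn_zero hsum, hg.apply_add_of_eqOn_zero (hvisible _)]

end

/-- Independent-subspace decomposition: if the variable-index sets `I k` have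
pairwise disjoint associated element sets `Y k` (with `E j = Y k` for `j ∈ I k`),
then for steps `s k` supported on `I k`, the total decrease of `f` is the sum of
the decreases of the individual steps. -/
theorem stmt_4 (n q m : ℕ) (X : Fin q → Finset (Fin n))
    (f : (Fin n → ℝ) → ℝ) (fi : Fin q → (Fin n → ℝ) → ℝ)
    (hf : ∀ x, f x = ∑ i, fi i x)
    (hdep : ∀ i : Fin q, ∀ x y : Fin n → ℝ,
      (∀ j ∈ X i, x j = y j) → fi i x = fi i y)
    (I : Fin m → Finset (Fin n)) (Y : Fin m → Finset (Fin q))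
    (hY : ∀ k, ∀ j ∈ I k,
      (Finset.univ.filter fun i : Fin q => j ∈ X i) = Y k)
    (hYdisj : ∀ k₁ k₂ : Fin m, k₁ ≠ k₂ → Y k₁ ∩ Y k₂ = ∅)
    (s : Fin m → (Fin n → ℝ))
    (hs : ∀ k, ∀ j ∉ I k, s k j = 0)
    (x : Fin n → ℝ) :
    f (x + ∑ k, s k) - f x = ∑ k, (f (x + s k) - f x) := by
  have hinvisible : ∀ i k, i ∉ Y k → EqOn (s k) 0 (X i) := fun i k hik j hj => by
    by_contra hjk
    exact hik (hY k j (not_imp_comm.mp (hs k j) hjk) ▸ by simpa using hj)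
  have hdecomp : ∀ i, fi i (x + ∑ k, s k) - fi i x = ∑ k, (fi i (x + s k) - fi i x) := by
    refine fun i => DependsOn.apply_add_sum_sub_eq_sum (fun x y h => hdep i x y h)
      (fun k₁ k₂ hne => ?_) x
    by_contra! hvisible
    have hmem : i ∈ Y k₁ ∩ Y k₂ := Finset.mem_inter.mpr
      ⟨not_imp_comm.mp (hinvisible i k₁) hvisible.1, not_imp_comm.mp (hinvisible i k₂) hvisible.2⟩
    simp [hYdisj k₁ k₂ hne] at hmem
  simp only [hf, ← Finset.sum_sub_distrib, hdecomp]
  exact Finset.sum_comm
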